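/- For every integer n ≥ 4 and every i ∈ {1,…,n}, the subgraph CW_n^i of CW_n is isomorphic (as a graph) to the bubble-sort star graph BS_{n−1}. -/

import Mathlib

/-- The generating set S₂ = {(1 j) : 2 ≤ j ≤ n} ∪ {(j j+1) : 2 ≤ j ≤ n−1} ∪ {(2 n)},
where elements of {1,…,n} are encoded zero-indexed as `Fin n` (value k represents k+1). -/
def cwGen (n : ℕ) : Set (Equiv.Perm (Fin n)) :=
  {s | ∃ i j : Fin n, s = Equiv.swap i j ∧
      (((i : ℕ) = 0 ∧ j ≠ i) ∨
       ((j : ℕ) = (i : ℕ) + 1 ∧ 1 ≤ (i : ℕ)) ∨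
       ((i : ℕ) = 1 ∧ (j : ℕ) = n - 1))}

/-- The Cayley graph CW_n = Cay(S_n, S₂). -/
def CW (n : ℕ) : SimpleGraph (Equiv.Perm (Fin n)) where
  Adj g h := g ≠ h ∧ g⁻¹ * h ∈ cwGen n
  symm := by
    constructor
    rintro g h ⟨hne, i, j, hs, hc⟩
    refine ⟨hne.symm, i, j, ?_, hc⟩
    have hinv : h⁻¹ * g = (g⁻¹ * h)⁻¹ := by group
    rw [hinv, hs, Equiv.swap_inv]
  loopless := ⟨fun g h => h.1 rfl⟩

/-- The generating set S₁ = {(1 j) : 2 ≤ j ≤ n} ∪ {(j j+1) : 2 ≤ j ≤ n−1},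
where elements of {1,…,n} are encoded zero-indexed as `Fin n` (value k represents k+1). -/
def bsGen (n : ℕ) : Set (Equiv.Perm (Fin n)) :=
  {s | ∃ i j : Fin n, s = Equiv.swap i j ∧
      (((i : ℕ) = 0 ∧ j ≠ i) ∨
       ((j : ℕ) = (i : ℕ) + 1 ∧ 1 ≤ (i : ℕ)))}

/-- The bubble-sort star graph BS_n = Cay(S_n, S₁). -/
def BS (n : ℕ) : SimpleGraph (Equiv.Perm (Fin n)) where
  Adj g h := g ≠ h ∧ g⁻¹ * h ∈ bsGen n
  symm := by
    constructor
    rintro g h ⟨hne, i, j, hs, hc⟩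
    refine ⟨hne.symm, i, j, ?_, hc⟩
    have hinv : h⁻¹ * g = (g⁻¹ * h)⁻¹ := by group
    rw [hinv, hs, Equiv.swap_inv]
  loopless := ⟨fun g h => h.1 rfl⟩

/-!
`CW_n^i` is the left coset `ρ K` of the stabiliser `K` of `n`, where `ρ = (n i)`. Left
translation by `ρ` is an automorphism of every Cayley graph, so `CW_n^i` is isomorphic to the
subgraph induced on `K ≅ S_{n-1}`, which is the Cayley graph of `S_{n-1}` with respect to the
generators lying in `K`. These are exactly `S₁`: the only elements of `S₂` moving `n` are
`(1 n)`, `(n-1 n)` and `(2 n)`.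
-/

open Equiv Equiv.Perm Fin SimpleGraph Pointwise

namespace SimpleGraph

variable {G H : Type*} [Group G] [Group H]

lemma mulCayley_adj_iff_of_inv_subset {S : Set G} (hS : S⁻¹ ⊆ S) (u v : G) :
    (mulCayley S).Adj u v ↔ u ≠ v ∧ u⁻¹ * v ∈ S := by
  rw [mulCayley_adj]
  refine and_congr_right fun _ => or_iff_left_of_imp fun h => hS ?_
  rwa [Set.mem_inv, mul_inv_rev, inv_inv]

def mulCayleyMulLeftIso (S : Set G) (ρ : G) : mulCayley S ≃g mulCayley S :=
  ⟨Equiv.mulLeft ρ, mulCayley_adj_mul_iff_right⟩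

noncomputable def mulCayleyPreimageIsoInduceRange (S : Set G) (f : H →* G)
    (hf : Function.Injective f) :
    mulCayley (f ⁻¹' S) ≃g (mulCayley S).induce (f.range : Set G) where
  toEquiv := (f.ofInjective hf).toEquiv
  map_rel_iff' {h h'} := by
    change (mulCayley S).Adj (f h) (f h') ↔ _
    simp only [mulCayley_adj, hf.ne_iff, Set.mem_preimage, map_mul, map_inv]

lemma nonempty_mulCayley_induce_smul_range_iso (S : Set G) (f : H →* G)
    (hf : Function.Injective f) (ρ : G) :
    Nonempty ((mulCayley S).induce (ρ • (f.range : Set G)) ≃g mulCayley (f ⁻¹' S)) :=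
  ⟨(mulCayleyPreimageIsoInduceRange S f hf).symm.comp
    ((mulCayleyMulLeftIso S ρ).induce (mul_right_injective ρ).injOn.bijOn_image).symm⟩

end SimpleGraph

lemma inv_setOf_swap_subset {α : Type*} [DecidableEq α] (P : α → α → Prop) :
    {s : Perm α | ∃ i j, s = swap i j ∧ P i j}⁻¹ ⊆ {s | ∃ i j, s = swap i j ∧ P i j} := by
  rintro s ⟨i, j, hs, hP⟩
  exact ⟨i, j, by rw [← inv_inv s, hs, swap_inv], hP⟩

lemma CW_eq_mulCayley (n : ℕ) : CW n = mulCayley (cwGen n) := by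
  ext u v
  exact (mulCayley_adj_iff_of_inv_subset (inv_setOf_swap_subset _) u v).symm

lemma BS_eq_mulCayley (n : ℕ) : BS n = mulCayley (bsGen n) := by
  ext u v
  exact (mulCayley_adj_iff_of_inv_subset (inv_setOf_swap_subset _) u v).symm

def extendLast (m : ℕ) : Perm (Fin m) →* Perm (Fin (m + 1)) :=
  ofSubtype.comp (finSuccAboveEquiv (last m)).permCongrHom.toMonoidHom

lemma extendLast_injective (m : ℕ) : Function.Injective (extendLast m) :=
  ofSubtype_injective.comp (finSuccAboveEquiv (last m)).permCongrHom.injective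

lemma extendLast_swap {m : ℕ} (a b : Fin m) :
    extendLast m (swap a b) = swap a.castSucc b.castSucc := by
  simp [extendLast, permCongrHom, permCongr_def, symm_trans_swap_trans, ofSubtype_swap_eq,
    finSuccAboveEquiv_apply]

lemma mem_range_extendLast {m : ℕ} {σ : Perm (Fin (m + 1))} :
    σ ∈ (extendLast m).range ↔ σ (last m) = last m := by
  constructor
  · rintro ⟨π, rfl⟩
    exact ofSubtype_apply_of_not_mem _ (not_not.2 rfl)
  · intro hσ
    obtain ⟨π, hπ⟩ := (mem_range_ofSubtype_iff (p := (· ≠ last m))).2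
      fun x hx (h : x = last m) => mem_support.1 hx (h ▸ hσ)
    exact ⟨(finSuccAboveEquiv (last m)).permCongrHom.symm π, by
      rw [extendLast, MonoidHom.comp_apply, MulEquiv.coe_toMonoidHom,
        MulEquiv.apply_symm_apply, hπ]⟩

lemma preimage_extendLast_cwGen {m : ℕ} (hm : m ≠ 1) :
    extendLast m ⁻¹' cwGen (m + 1) = bsGen m := by
  ext τ
  constructor
  · rintro ⟨a, b, hab, hc⟩
    have hne : a ≠ b := by
      rintro rfl
      rcases hc with ⟨-, h⟩ | ⟨h, -⟩ | ⟨h, h'⟩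
      exacts [h rfl, by omega, hm (by omega)]
    have hfix : swap a b (last m) = last m := hab ▸ mem_range_extendLast.1 ⟨τ, rfl⟩
    obtain ⟨a, rfl⟩ := exists_castSucc_eq.2 fun h =>
      swap_apply_ne_self_iff.2 ⟨hne, .inl h.symm⟩ hfix
    obtain ⟨b, rfl⟩ := exists_castSucc_eq.2 fun h =>
      swap_apply_ne_self_iff.2 ⟨hne, .inr h.symm⟩ hfix
    refine ⟨a, b, extendLast_injective m (by rw [hab, extendLast_swap]), ?_⟩
    simp only [val_castSucc, ne_eq, castSucc_inj] at hc
    rcases hc with hc | hc | ⟨-, hb⟩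
    exacts [.inl hc, .inr hc, absurd hb (by omega)]
  · rintro ⟨a, b, rfl, hc⟩
    refine ⟨a.castSucc, b.castSucc, extendLast_swap a b, ?_⟩
    simp only [val_castSucc, ne_eq, castSucc_inj]
    exact hc.imp_right .inl

lemma setOf_apply_last_eq_smul_range (m : ℕ) (i : Fin (m + 1)) :
    {σ : Perm (Fin (m + 1)) | σ (last m) = i} =
      swap (last m) i • ((extendLast m).range : Set (Perm (Fin (m + 1)))) := by
  ext σ
  rw [Set.mem_smul_set_iff_inv_smul_mem, SetLike.mem_coe, mem_range_extendLast, swap_inv,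
    smul_eq_mul, mul_apply, Set.mem_ofPred_eq, swap_apply_eq_iff, swap_apply_left]

/-- For n ≥ 4 and any index i, the copy CW_n^i (the subgraph of CW_n induced by
{σ : σ(n) = i}) is isomorphic to the bubble-sort star graph BS_{n−1}. -/
theorem stmt15 (n : ℕ) (hn : 4 ≤ n) (i : Fin n) :
    Nonempty (((CW n).induce {σ : Equiv.Perm (Fin n) | σ ⟨n - 1, by omega⟩ = i}) ≃g
      BS (n - 1)) := by
  obtain ⟨m, rfl⟩ : ∃ m, n = m + 1 := ⟨n - 1, by omega⟩
  have key :
      Nonempty (((CW (m + 1)).induce {σ : Perm (Fin (m + 1)) | σ (last m) = i}) ≃g BS m) := by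
    rw [CW_eq_mulCayley, BS_eq_mulCayley, setOf_apply_last_eq_smul_range,
      ← preimage_extendLast_cwGen (by omega)]
    exact nonempty_mulCayley_induce_smul_range_iso _ _ (extendLast_injective m) _
  exact key
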